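/- Let X be a topological space equipped with cell data (P, ε, σ ↦ U_σ) satisfying (P1) and (P2), and let F be a sheaf of abelian groups on X such that for every x ∈ X and every i ≥ 1 the cohomology H^i(K•(P_x, F_x)) vanishes, where F_x denotes the stalk of F at x. Then the reduced Čech cohomology of the Godement sheaf I_F vanishes in positive degrees: Ȟ^i_P(I_F) = 0 for all i ≥ 1. (This is Lemma 3.7 of the paper, with the paper's condition (P4) rendered in its precise cochain-level form.) -/

import Mathlib

open CategoryTheory TopologicalSpace Opposite Function

universe u

/-- Cell data on a topological space `X`: a type of cells with a partial order and
dimension function, an incidence function satisfying the axioms of an incidence function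
on a cell complex, and an order-reversing assignment of open sets covering `X`
(conditions (P1) and (P2)). -/
structure CellData (X : Type u) [TopologicalSpace X] : Type (u + 1) where
  /-- the type of cells -/
  P : Type u
  /-- the partial order on cells -/
  [po : PartialOrder P]
  /-- the dimension of each cell -/
  dim : P → ℕ
  /-- the incidence function -/
  eps : P → P → ℤ
  /-- axiom (i): for fixed `σ'` only finitely many `σ` have `eps σ σ' ≠ 0` -/
  eps_finite : ∀ σ' : P, {σ : P | eps σ σ' ≠ 0}.Finite
  /-- axiom (ii): `eps σ σ' = 0` unless `σ < σ'` and `dim σ' = dim σ + 1` -/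
  eps_eq_zero : ∀ σ σ' : P, ¬(σ < σ' ∧ dim σ' = dim σ + 1) → eps σ σ' = 0
  /-- axiom (iii) -/
  eps_comp : ∀ σ σ'' : P, dim σ'' = dim σ + 2 →
    (∑ᶠ σ' : P, eps σ σ' * eps σ' σ'') = 0
  /-- the open set attached to each cell -/
  U : P → Opens X
  /-- condition (P1): the assignment is order reversing -/
  mono : ∀ {σ σ' : P}, σ ≤ σ' → U σ' ≤ U σ
  /-- condition (P2): the open sets cover `X` -/
  covers : ∀ x : X, ∃ σ : P, x ∈ U σ

attribute [instance] CellData.po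

namespace CellData

variable {X : TopCat.{u}} (D : CellData ↥X)

/-- The cells of dimension `i`. -/
abbrev Cells (i : ℕ) : Type u := {σ : D.P // D.dim σ = i}

variable (F : TopCat.Presheaf Ab.{u} X)

/-- The `i`-th term of the reduced Čech complex of the presheaf `F`:
the product of the sections of `F` over the `U σ` for `σ` of dimension `i`. -/
abbrev cochain (i : ℕ) : Type u := ∀ σ : D.Cells i, ↥(F.obj (op (D.U σ.1)))

open scoped Classical in
/-- For a pair of cells, `eps σ σ'` times the restriction map from `U σ` to `U σ'`
(interpreted as `0` unless `σ ≤ σ'`). -/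
noncomputable def pairMap (σ σ' : D.P) :
    ↥(F.obj (op (D.U σ))) →+ ↥(F.obj (op (D.U σ'))) :=
  D.eps σ σ' • (if h : σ ≤ σ' then ((F.map (homOfLE (D.mono h)).op).hom : _ →+ _) else 0)

lemma support_pairMap_finite {i : ℕ} (σ' : D.Cells (i + 1)) (f : D.cochain F i) :
    (Function.support fun σ : D.Cells i => D.pairMap F σ.1 σ'.1 (f σ)).Finite := by
  apply Set.Finite.subset ((D.eps_finite σ'.1).preimage (Set.injOn_of_injective Subtype.val_injective))
  intro σ hσ
  simp only [Function.mem_support] at hσ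
  simp only [Set.mem_preimage, Set.mem_setOf_eq]
  intro hz
  apply hσ
  simp [pairMap, hz]

/-- The differential of the reduced Čech complex. -/
noncomputable def cechDiff (i : ℕ) : D.cochain F i →+ D.cochain F (i + 1) :=
  AddMonoidHom.mk'
    (fun f σ' => ∑ᶠ σ : D.Cells i, D.pairMap F σ.1 σ'.1 (f σ))
    (by
      intro f g
      funext σ'
      have : ∀ σ : D.Cells i, D.pairMap F σ.1 σ'.1 ((f + g) σ)
          = D.pairMap F σ.1 σ'.1 (f σ) + D.pairMap F σ.1 σ'.1 (g σ) := by
        intro σ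
        rw [Pi.add_apply, map_add]
      show (∑ᶠ σ : D.Cells i, D.pairMap F σ.1 σ'.1 ((f + g) σ)) = _
      rw [finsum_congr this,
        finsum_add_distrib (D.support_pairMap_finite F σ' f) (D.support_pairMap_finite F σ' g)]
      rfl)

/-- The cocycles of the reduced Čech complex. -/
noncomputable def cechCocycles (i : ℕ) : AddSubgroup (D.cochain F i) :=
  (D.cechDiff F i).ker

/-- The coboundaries of the reduced Čech complex. -/
noncomputable def cechCoboundaries : (i : ℕ) → AddSubgroup (D.cochain F i)
  | 0 => ⊥
  | (j + 1) => (D.cechDiff F j).range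

/-- The `i`-th reduced Čech cohomology group `Ȟ^i_P(F)`. -/
noncomputable def reducedCechCohomology (i : ℕ) : Type u :=
  ↥(D.cechCocycles F i) ⧸
    ((D.cechCoboundaries F i).addSubgroupOf (D.cechCocycles F i))

noncomputable instance (i : ℕ) : AddCommGroup (D.reducedCechCohomology F i) :=
  QuotientAddGroup.Quotient.addCommGroup _

end CellData

namespace CellData

variable {X : TopCat.{u}} (D : CellData ↥X)

/-- For `x : X`, the cells `σ` of dimension `i` with `x ∈ U σ` (the `i`-cells of `P ₓ`). -/
abbrev KCells (x : ↥X) (i : ℕ) : Type u := {σ : D.P // x ∈ D.U σ ∧ D.dim σ = i}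

/-- The `i`-th term of the complex `K^•(Pₓ, A)`. -/
abbrev KCochain (x : ↥X) (A : Type u) [AddCommGroup A] (i : ℕ) : Type u :=
  D.KCells x i → A

/-- The differential of the complex `K^•(Pₓ, A)`. -/
noncomputable def KDiffFun (x : ↥X) (A : Type u) [AddCommGroup A] (i : ℕ)
    (f : D.KCochain x A i) : D.KCochain x A (i + 1) :=
  fun σ' => ∑ᶠ σ : D.KCells x i, D.eps σ.1 σ'.1 • f σ

/-- Condition (P3'): for every point `x` and every abelian group `A`, the map sending
`a : A` to the constant family in `K⁰(Pₓ, A)` is injective with image exactly the kernel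
of the differential `K⁰(Pₓ, A) → K¹(Pₓ, A)`. -/
def CondP3 : Prop :=
  ∀ (x : ↥X) (A : Type u) [AddCommGroup A],
    Function.Injective (fun (a : A) (_ : D.KCells x 0) => a) ∧
      Set.range (fun (a : A) (_ : D.KCells x 0) => a) =
        {f : D.KCochain x A 0 | D.KDiffFun x A 0 f = 0}

/-- Condition (P4'): for every point `x`, every abelian group `A` and every `i ≥ 1`, the
cohomology of the complex `K^•(Pₓ, A)` in degree `i` vanishes; i.e., every cocycle in
degree `i = j + 1` is a coboundary. -/
def CondP4 : Prop :=
  ∀ (x : ↥X) (A : Type u) [AddCommGroup A] (j : ℕ)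
    (f : D.KCochain x A (j + 1)), D.KDiffFun x A (j + 1) f = 0 →
      ∃ g : D.KCochain x A j, D.KDiffFun x A j g = f

end CellData

/-! The sections of the Godement sheaf over `U` are the families `∏_{x ∈ U} Fₓ`,
so a Čech cochain of `I_F` is the same as a family, indexed by `x ∈ X`, of cochains of
`K•(Pₓ, Fₓ)`, and the Čech differential acts on the component at `x` as the differential of
`K•(Pₓ, Fₓ)`. Hence `Č•_P(I_F) ≅ ∏ₓ K•(Pₓ, Fₓ)` as complexes, and a Čech cocycle of positive
degree is a coboundary because each of its components is. -/

theorem finsum_comp_of_support_subset_range {M α β : Type*} [AddCommMonoid M] {g : β → α}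
    (hg : Injective g) {t : α → M} (ht : support t ⊆ Set.range g) :
    ∑ᶠ b, t (g b) = ∑ᶠ a, t a := by
  rw [← finsum_mem_range hg, ← finsum_mem_univ t]
  exact finsum_mem_inter_support_eq' t _ _ fun a ha => by simpa using ht ha

namespace CellData

variable {X : TopCat.{u}} (D : CellData ↥X)

lemma pairMap_of_le (F : TopCat.Presheaf Ab.{u} X) {σ σ' : D.P} (h : σ ≤ σ')
    (s : ↥(F.obj (op (D.U σ)))) :
    D.pairMap F σ σ' s = D.eps σ σ' • F.map (homOfLE (D.mono h)).op s := by
  classical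
  rw [pairMap, dif_pos h]
  rfl

lemma eps_eq_zero_of_not_le {σ σ' : D.P} (h : ¬σ ≤ σ') : D.eps σ σ' = 0 :=
  D.eps_eq_zero σ σ' fun h' => h h'.1.le

lemma pairMap_eq_zero_of_not_le (F : TopCat.Presheaf Ab.{u} X) {σ σ' : D.P} (h : ¬σ ≤ σ') :
    D.pairMap F σ σ' = 0 := by
  rw [pairMap, D.eps_eq_zero_of_not_le h, zero_smul]

lemma subsingleton_reducedCechCohomology_succ (F : TopCat.Presheaf Ab.{u} X) (j : ℕ)
    (h : ∀ c : D.cochain F (j + 1), D.cechDiff F (j + 1) c = 0 → ∃ b, D.cechDiff F j b = c) :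
    Subsingleton (D.reducedCechCohomology F (j + 1)) := by
  refine QuotientAddGroup.subsingleton_iff.mpr ((AddSubgroup.eq_top_iff' _).mpr ?_)
  rintro ⟨c, hc⟩
  exact AddSubgroup.mem_addSubgroupOf.mpr (h c hc)

section ProductPresheaf

variable {A : ↥X → Type u} [∀ x, AddCommGroup (A x)] {I : TopCat.Presheaf Ab.{u} X}
  (e : ∀ U : Opens ↥X, ↥(I.obj (op U)) ≃+ ∀ x : ↥U, A x)

def cochainAt {m : ℕ} (c : D.cochain I m) (x : ↥X) : D.KCochain x (A x) m :=
  fun σ => e (D.U σ.1) (c ⟨σ.1, σ.2.2⟩) ⟨x, σ.2.1⟩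

def cochainOfComponents {m : ℕ} (g : ∀ x, D.KCochain x (A x) m) : D.cochain I m :=
  fun σ => (e (D.U σ.1)).symm fun x => g x.1 ⟨σ.1, x.2, σ.2⟩

lemma cochainAt_cochainOfComponents {m : ℕ} (g : ∀ x, D.KCochain x (A x) m) (x : ↥X) :
    D.cochainAt e (D.cochainOfComponents e g) x = g x := by
  funext σ
  simp [cochainAt, cochainOfComponents]

lemma cochain_ext_cochainAt {m : ℕ} {c c' : D.cochain I m}
    (h : ∀ x, D.cochainAt e c x = D.cochainAt e c' x) : c = c' := by
  funext σ
  refine (e (D.U σ.1)).injective (funext fun x => ?_)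
  exact congrFun (h x.1) ⟨σ.1, x.2, σ.2⟩

variable (he : ∀ (V U : Opens ↥X) (h : V ≤ U) (s : ↥(I.obj (op U))) (x : ↥V),
  e V (I.map (homOfLE h).op s) x = e U s ⟨x.1, h x.2⟩)
include he

lemma cochainAt_cechDiff {m : ℕ} (c : D.cochain I m) (x : ↥X) :
    D.cochainAt e (D.cechDiff I m c) x = D.KDiffFun x (A x) m (D.cochainAt e c x) := by
  funext σ'
  let evalAtX : ↥(I.obj (op (D.U σ'.1))) →+ A x :=
    (Pi.evalAddMonoidHom _ ⟨x, σ'.2.1⟩).comp (e (D.U σ'.1)).toAddMonoidHom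
  let toCells : D.KCells x m → D.Cells m := fun σ => ⟨σ.1, σ.2.2⟩
  have toCells_injective : Function.Injective toCells := fun σ τ h =>
    Subtype.ext (congrArg Subtype.val h :)
  have term_eq : ∀ σ : D.KCells x m, evalAtX (D.pairMap I σ.1 σ'.1 (c (toCells σ))) =
      D.eps σ.1 σ'.1 • D.cochainAt e c x σ := by
    intro σ
    by_cases hle : σ.1 ≤ σ'.1
    · rw [D.pairMap_of_le I hle, map_zsmul]
      exact congrArg (D.eps σ.1 σ'.1 • ·) (he _ _ _ _ _)
    · simp [D.pairMap_eq_zero_of_not_le I hle, D.eps_eq_zero_of_not_le hle]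
  -- Only cells `σ ≤ σ'` contribute, and those satisfy `x ∈ U σ' ⊆ U σ`.
  have support_sub : support (fun σ : D.Cells m => evalAtX (D.pairMap I σ.1 σ'.1 (c σ))) ⊆
      Set.range toCells := by
    intro σ hσ
    have hle : σ.1 ≤ σ'.1 := by
      by_contra hle
      exact hσ (by simp [D.pairMap_eq_zero_of_not_le I hle])
    exact ⟨⟨σ.1, D.mono hle σ'.2.1, σ.2⟩, rfl⟩
  calc evalAtX (∑ᶠ σ : D.Cells m, D.pairMap I σ.1 σ'.1 (c σ))
      = ∑ᶠ σ : D.Cells m, evalAtX (D.pairMap I σ.1 σ'.1 (c σ)) :=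
        evalAtX.map_finsum (D.support_pairMap_finite I ⟨σ'.1, σ'.2.2⟩ c)
    _ = ∑ᶠ σ : D.KCells x m, evalAtX (D.pairMap I σ.1 σ'.1 (c (toCells σ))) :=
        (finsum_comp_of_support_subset_range toCells_injective support_sub).symm
    _ = ∑ᶠ σ : D.KCells x m, D.eps σ.1 σ'.1 • D.cochainAt e c x σ := finsum_congr term_eq

theorem exists_cechDiff_eq_of_cechDiff_eq_zero {j : ℕ}
    (hexact : ∀ (x : ↥X) (f : D.KCochain x (A x) (j + 1)),
      D.KDiffFun x (A x) (j + 1) f = 0 → ∃ g, D.KDiffFun x (A x) j g = f)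
    (c : D.cochain I (j + 1)) (hc : D.cechDiff I (j + 1) c = 0) :
    ∃ b, D.cechDiff I j b = c := by
  have hcx : ∀ x, D.KDiffFun x (A x) (j + 1) (D.cochainAt e c x) = 0 := fun x => by
    rw [← D.cochainAt_cechDiff e he, hc]
    funext σ
    simp [cochainAt]
  choose g hg using fun x => hexact x _ (hcx x)
  refine ⟨D.cochainOfComponents e g, D.cochain_ext_cochainAt e fun x => ?_⟩
  rw [D.cochainAt_cechDiff e he, D.cochainAt_cochainOfComponents, hg]

end ProductPresheaf

end CellData

/-- Lemma 3.7: let `X` carry cell data satisfying (P1), (P2), let `F` be a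
sheaf of abelian groups on `X` such that for every point `x` the cohomology of the
complex `K^•(Pₓ, Fₓ)` with coefficients in the stalk `Fₓ` vanishes in all degrees `≥ 1`
(the cochain-level form of condition (P4)).  Let `I` be the Godement sheaf of `F`, i.e. a
sheaf whose sections over each open `U` are identified with `∏_{x ∈ U} Fₓ`, compatibly
with restriction (restriction corresponding to projection).  Then the reduced Čech
cohomology of `I` vanishes in all degrees `≥ 1`. -/
theorem stmt2 (X : TopCat.{u}) (D : CellData ↥X)
    (F : TopCat.Sheaf Ab.{u} X)
    (hP4stalk : ∀ (x : ↥X) (j : ℕ) (f : D.KCochain x ↥((TopCat.Presheaf.stalk F.val x)) (j + 1)),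
      D.KDiffFun x ↥((TopCat.Presheaf.stalk F.val x)) (j + 1) f = 0 →
        ∃ g : D.KCochain x ↥((TopCat.Presheaf.stalk F.val x)) j, D.KDiffFun x ↥((TopCat.Presheaf.stalk F.val x)) j g = f)
    (I : TopCat.Sheaf Ab.{u} X)
    (e : ∀ U : Opens ↥X, ↥(I.val.obj (op U)) ≃+ ∀ x : ↥U, ↥((TopCat.Presheaf.stalk F.val x.1)))
    (he : ∀ (V U : Opens ↥X) (h : V ≤ U) (s : ↥(I.val.obj (op U))) (x : ↥V),
      e V (I.val.map (homOfLE h).op s) x = e U s ⟨x.1, h x.2⟩)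
    (i : ℕ) (hi : 1 ≤ i) :
    Subsingleton (D.reducedCechCohomology I.val i) := by
  obtain ⟨j, rfl⟩ : ∃ j, i = j + 1 := Nat.exists_eq_add_of_le' hi
  exact D.subsingleton_reducedCechCohomology_succ I.val j
    (D.exists_cechDiff_eq_of_cechDiff_eq_zero e he (hP4stalk · j))
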